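/- The space l(r,s,t,p;Δ) with 1 < p_n ≤ M, equipped with the Luxemburg norm, is a BK space: it is a Banach space in which each coordinate functional x ↦ x_k is continuous. -/

import Mathlib

open Finset Filter Topology ENNReal

/-- The difference operator `Δ` with the convention `x₋₁ = 0`. -/
def del (x : ℕ → ℝ) (k : ℕ) : ℝ :=
  x k - if k = 0 then 0 else x (k - 1)

/-- The generalized-means-of-differences transform `(A(r,s,t)·Δ)x`. -/
noncomputable def Amap (r s t : ℕ → ℝ) (x : ℕ → ℝ) (n : ℕ) : ℝ :=
  (1 / r n) * ∑ k ∈ Finset.range (n + 1), s (n - k) * t k * del x k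

/-- The modular `σ_p` on `l(r,s,t,p;Δ)`, with values in `[0,∞]`. -/
noncomputable def sigmaP (r s t p : ℕ → ℝ) (x : ℕ → ℝ) : ℝ≥0∞ :=
  ∑' n, ENNReal.ofReal (|Amap r s t x n| ^ p n)

/-- The space `l(r,s,t,p;Δ)`. -/
def lrstp (r s t p : ℕ → ℝ) : Set (ℕ → ℝ) :=
  {x | sigmaP r s t p x < ⊤}

/-- The paranorm `h̃` on `l(r,s,t,p;Δ)`. -/
noncomputable def htilde (r s t p : ℕ → ℝ) (M : ℝ) (x : ℕ → ℝ) : ℝ :=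
  ((sigmaP r s t p x).toReal) ^ (1 / M)

/-- The Luxemburg norm on `l(r,s,t,p;Δ)`. -/
noncomputable def lux (r s t p : ℕ → ℝ) (x : ℕ → ℝ) : ℝ :=
  sInf {c : ℝ | 0 < c ∧ sigmaP r s t p (c⁻¹ • x) ≤ 1}
/-!
`A(r,s,t)` is lower triangular with nonzero diagonal entries `s 0 * t n / r n`, so each `Δx_n`, and
hence each `x_k`, is a fixed linear combination of `(A x)_0, …, (A x)_k`; and `|(A x)_n| ≤ ‖x‖`,
because `σ_p(x / c) ≤ 1` bounds each of its terms `|(A x)_n / c| ^ p_n` by `1`. Together these give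
definiteness of the norm and continuity of the coordinates. Homogeneity is a rescaling of the set
defining the infimum, and the triangle inequality is the convexity of `σ_p` (as `p_n ≥ 1`). A Cauchy
sequence converges coordinatewise, and lower semicontinuity of `σ_p` under coordinatewise
convergence (Fatou) turns the Cauchy estimates into convergence in norm; the bound `p_n ≤ M`
makes the space closed under differences, so the limit lies in it.
-/

open scoped Pointwise

section Transform

variable {r s t : ℕ → ℝ}

lemma del_add (x y : ℕ → ℝ) (k : ℕ) : del (x + y) k = del x k + del y k := by
  unfold del; split_ifs <;> simp only [Pi.add_apply] <;> ring

lemma del_smul (c : ℝ) (x : ℕ → ℝ) (k : ℕ) : del (c • x) k = c * del x k := by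
  unfold del; split_ifs <;> simp only [Pi.smul_apply, smul_eq_mul] <;> ring

lemma sum_range_succ_del (x : ℕ → ℝ) (n : ℕ) : ∑ k ∈ range (n + 1), del x k = x n := by
  induction n with
  | zero => simp [del]
  | succ n ih => rw [sum_range_succ, ih, del]; simp

lemma Amap_add (x y : ℕ → ℝ) (n : ℕ) :
    Amap r s t (x + y) n = Amap r s t x n + Amap r s t y n := by
  simp only [Amap, del_add, mul_add, sum_add_distrib]

lemma Amap_smul (c : ℝ) (x : ℕ → ℝ) (n : ℕ) : Amap r s t (c • x) n = c * Amap r s t x n := by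
  simp only [Amap, del_smul, mul_sum]
  exact sum_congr rfl fun _ _ => by ring

lemma tendsto_Amap {ι : Type*} {F : Filter ι} {ys : ι → ℕ → ℝ} {z : ℕ → ℝ}
    (h : ∀ k, Tendsto (fun i => ys i k) F (𝓝 (z k))) (n : ℕ) :
    Tendsto (fun i => Amap r s t (ys i) n) F (𝓝 (Amap r s t z n)) := by
  refine .const_mul _ (tendsto_finsetSum _ fun k _ => .const_mul _ ?_)
  unfold del
  split_ifs
  · simpa using h k
  · exact (h k).sub (h (k - 1))

lemma del_eq_of_Amap {n : ℕ} (hr : r n ≠ 0) (ht : t n ≠ 0) (hs0 : s 0 ≠ 0) (x : ℕ → ℝ) :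
    del x n =
      (r n * Amap r s t x n - ∑ k ∈ range n, s (n - k) * t k * del x k) / (s 0 * t n) := by
  rw [eq_div_iff (mul_ne_zero hs0 ht), Amap, ← mul_assoc (r n), mul_one_div_cancel hr, one_mul,
    sum_range_succ, Nat.sub_self]
  ring

variable (hr : ∀ n, r n ≠ 0) (ht : ∀ n, t n ≠ 0) (hs0 : s 0 ≠ 0)
include hr ht hs0

lemma tendsto_del_of_tendsto_Amap {ι : Type*} {F : Filter ι} {ys : ι → ℕ → ℝ}
    (h : ∀ n, Tendsto (fun i => Amap r s t (ys i) n) F (𝓝 0)) (n : ℕ) :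
    Tendsto (fun i => del (ys i) n) F (𝓝 0) := by
  induction n using Nat.strong_induction_on with
  | _ n ih =>
    simp only [del_eq_of_Amap (hr n) (ht n) hs0]
    simpa using (((h n).const_mul (r n)).sub (tendsto_finsetSum _ fun k hk =>
      (ih k (mem_range.mp hk)).const_mul (s (n - k) * t k))).div_const (s 0 * t n)

lemma tendsto_apply_of_tendsto_Amap {ι : Type*} {F : Filter ι} {ys : ι → ℕ → ℝ}
    (h : ∀ n, Tendsto (fun i => Amap r s t (ys i) n) F (𝓝 0)) (k : ℕ) :
    Tendsto (fun i => ys i k) F (𝓝 0) := by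
  simp only [← sum_range_succ_del _ k]
  simpa using tendsto_finsetSum _ fun j _ => tendsto_del_of_tendsto_Amap hr ht hs0 h j

lemma eq_zero_of_Amap_eq_zero {x : ℕ → ℝ} (h : ∀ n, Amap r s t x n = 0) : x = 0 :=
  funext fun k => tendsto_nhds_unique tendsto_const_nhds
    (tendsto_apply_of_tendsto_Amap (F := (atTop : Filter ℕ)) (ys := fun _ => x) hr ht hs0
      (fun n => by simp only [h, tendsto_const_nhds]) k)

end Transform

lemma abs_add_rpow_le {q a b : ℝ} (hq : 1 ≤ q) (ha : 0 ≤ a) (hb : 0 ≤ b) (hab : a + b = 1)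
    (u v : ℝ) : |a * u + b * v| ^ q ≤ a * |u| ^ q + b * |v| ^ q := by
  have hle : |a * u + b * v| ≤ a * |u| + b * |v| := by
    simpa only [abs_mul, abs_of_nonneg ha, abs_of_nonneg hb] using abs_add_le (a * u) (b * v)
  calc |a * u + b * v| ^ q ≤ (a * |u| + b * |v|) ^ q :=
        Real.rpow_le_rpow (abs_nonneg _) hle (by linarith)
    _ ≤ a * |u| ^ q + b * |v| ^ q := by
        simpa only [smul_eq_mul] using (convexOn_rpow hq).2 (abs_nonneg u) (abs_nonneg v) ha hb hab

section Modular

variable {r s t p : ℕ → ℝ}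

lemma sigmaP_zero (hp : ∀ n, p n ≠ 0) : sigmaP r s t p 0 = 0 := by
  have hA : ∀ n, Amap r s t 0 n = 0 := fun n => by
    simpa using Amap_smul (r := r) (s := s) (t := t) 0 0 n
  simp [sigmaP, hA, Real.zero_rpow (hp _)]

lemma sigmaP_smul_abs (c : ℝ) (x : ℕ → ℝ) : sigmaP r s t p (c • x) = sigmaP r s t p (|c| • x) := by
  simp only [sigmaP, Amap_smul, abs_mul, abs_abs]

lemma sigmaP_neg (x : ℕ → ℝ) : sigmaP r s t p (-x) = sigmaP r s t p x := by
  rw [← neg_one_smul ℝ x, sigmaP_smul_abs, abs_neg, abs_one, one_smul]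

lemma sigmaP_smul_le_of_abs_le_one (hp : ∀ n, 1 ≤ p n) {c : ℝ} (hc : |c| ≤ 1) (x : ℕ → ℝ) :
    sigmaP r s t p (c • x) ≤ ENNReal.ofReal |c| * sigmaP r s t p x := by
  rw [sigmaP, sigmaP, ← ENNReal.tsum_mul_left]
  refine ENNReal.tsum_le_tsum fun n => ?_
  rw [← ENNReal.ofReal_mul (abs_nonneg c), Amap_smul, abs_mul,
    Real.mul_rpow (abs_nonneg c) (abs_nonneg _)]
  refine ENNReal.ofReal_le_ofReal (mul_le_mul_of_nonneg_right ?_ (by positivity))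
  simpa using Real.rpow_le_rpow_of_exponent_ge' (abs_nonneg c) hc zero_le_one (hp n)

lemma sigmaP_smul_le_of_one_le_abs {M : ℝ} (hpM : ∀ n, p n ≤ M) {c : ℝ} (hc : 1 ≤ |c|)
    (x : ℕ → ℝ) : sigmaP r s t p (c • x) ≤ ENNReal.ofReal (|c| ^ M) * sigmaP r s t p x := by
  rw [sigmaP, sigmaP, ← ENNReal.tsum_mul_left]
  refine ENNReal.tsum_le_tsum fun n => ?_
  rw [← ENNReal.ofReal_mul (by positivity), Amap_smul, abs_mul,
    Real.mul_rpow (abs_nonneg c) (abs_nonneg _)]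
  exact ENNReal.ofReal_le_ofReal (mul_le_mul_of_nonneg_right
    (Real.rpow_le_rpow_of_exponent_le hc (hpM n)) (by positivity))

lemma sigmaP_add_le (hp : ∀ n, 1 ≤ p n) {a b : ℝ} (ha : 0 ≤ a) (hb : 0 ≤ b) (hab : a + b = 1)
    (x y : ℕ → ℝ) :
    sigmaP r s t p (a • x + b • y) ≤
      ENNReal.ofReal a * sigmaP r s t p x + ENNReal.ofReal b * sigmaP r s t p y := by
  rw [sigmaP, sigmaP, sigmaP, ← ENNReal.tsum_mul_left, ← ENNReal.tsum_mul_left,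
    ← ENNReal.tsum_add]
  refine ENNReal.tsum_le_tsum fun n => ?_
  rw [← ENNReal.ofReal_mul ha, ← ENNReal.ofReal_mul hb, ← ENNReal.ofReal_add (by positivity)
    (by positivity), Amap_add, Amap_smul, Amap_smul]
  exact ENNReal.ofReal_le_ofReal (abs_add_rpow_le (hp n) ha hb hab _ _)

lemma sub_mem_lrstp {M : ℝ} (hp : ∀ n, 1 ≤ p n) (hpM : ∀ n, p n ≤ M) {x y : ℕ → ℝ}
    (hx : x ∈ lrstp r s t p) (hy : y ∈ lrstp r s t p) : x - y ∈ lrstp r s t p := by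
  have hxy : x - y = (2 : ℝ) • ((1 / 2 : ℝ) • x + (1 / 2 : ℝ) • -y) := by
    rw [smul_add, smul_smul, smul_smul]; norm_num [sub_eq_add_neg]
  change sigmaP r s t p _ < ⊤
  rw [hxy]
  refine (sigmaP_smul_le_of_one_le_abs hpM (by norm_num) _).trans_lt
    (ENNReal.mul_lt_top ENNReal.ofReal_lt_top ?_)
  refine (sigmaP_add_le hp (by norm_num) (by norm_num) (by norm_num) _ _).trans_lt ?_
  rw [sigmaP_neg]
  exact ENNReal.add_lt_top.2
    ⟨ENNReal.mul_lt_top ENNReal.ofReal_lt_top hx, ENNReal.mul_lt_top ENNReal.ofReal_lt_top hy⟩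

lemma sigmaP_le_of_tendsto (hp : ∀ n, 0 ≤ p n) {ι : Type*} {F : Filter ι} [F.NeBot]
    {ys : ι → ℕ → ℝ} {z : ℕ → ℝ} (hyz : ∀ k, Tendsto (fun i => ys i k) F (𝓝 (z k)))
    {C : ℝ≥0∞} (hC : ∀ᶠ i in F, sigmaP r s t p (ys i) ≤ C) : sigmaP r s t p z ≤ C := by
  rw [sigmaP, ENNReal.tsum_eq_iSup_sum]
  refine iSup_le fun S => le_of_tendsto (tendsto_finsetSum _ fun n _ => ?_)
    (hC.mono fun i hi => (ENNReal.sum_le_tsum S).trans hi)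
  exact ENNReal.tendsto_ofReal ((tendsto_Amap hyz n).abs.rpow_const (Or.inr (hp n)))

end Modular

section Luxemburg

variable {r s t p : ℕ → ℝ}

def luxSet (r s t p : ℕ → ℝ) (x : ℕ → ℝ) : Set ℝ :=
  {c : ℝ | 0 < c ∧ sigmaP r s t p (c⁻¹ • x) ≤ 1}

lemma lux_def (x : ℕ → ℝ) : lux r s t p x = sInf (luxSet r s t p x) := rfl

lemma luxSet_bddBelow (x : ℕ → ℝ) : BddBelow (luxSet r s t p x) := ⟨0, fun _ hc => hc.1.le⟩

lemma lux_nonneg (x : ℕ → ℝ) : 0 ≤ lux r s t p x := Real.sInf_nonneg fun _ hc => hc.1.le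

lemma lux_le_of_mem {x : ℕ → ℝ} {c : ℝ} (hc : c ∈ luxSet r s t p x) : lux r s t p x ≤ c :=
  csInf_le (luxSet_bddBelow x) hc

lemma lux_zero (hp : ∀ n, p n ≠ 0) : lux r s t p 0 = 0 := by
  have : luxSet r s t p 0 = Set.Ioi 0 := by
    ext c
    simp [luxSet, sigmaP_zero hp]
  rw [lux_def, this, csInf_Ioi]

lemma mem_luxSet_of_le (hp : ∀ n, 1 ≤ p n) {x : ℕ → ℝ} {c d : ℝ} (hc : c ∈ luxSet r s t p x)
    (hcd : c ≤ d) : d ∈ luxSet r s t p x := by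
  obtain ⟨hc0, hcx⟩ := hc
  have hd0 : 0 < d := hc0.trans_le hcd
  have hcd' : |c / d| ≤ 1 := by
    rw [abs_of_pos (div_pos hc0 hd0)]; exact div_le_one_of_le₀ hcd hd0.le
  refine ⟨hd0, ?_⟩
  have hx : d⁻¹ • x = (c / d) • c⁻¹ • x := by rw [smul_smul]; field_simp
  calc sigmaP r s t p (d⁻¹ • x) ≤ ENNReal.ofReal |c / d| * sigmaP r s t p (c⁻¹ • x) := by
        rw [hx]; exact sigmaP_smul_le_of_abs_le_one hp hcd' _
    _ ≤ 1 := by simpa using mul_le_one' (ENNReal.ofReal_le_one.2 hcd') hcx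

lemma luxSet_nonempty (hp : ∀ n, 1 ≤ p n) {x : ℕ → ℝ} (hx : x ∈ lrstp r s t p) :
    (luxSet r s t p x).Nonempty := by
  set c : ℝ := max 1 (sigmaP r s t p x).toReal
  have hc : 1 ≤ c := le_max_left _ _
  have hc0 : 0 < c := one_pos.trans_le hc
  have hcinv : |c⁻¹| ≤ 1 := by rw [abs_of_pos (inv_pos.2 hc0)]; exact inv_le_one_of_one_le₀ hc
  refine ⟨c, hc0, ?_⟩
  calc sigmaP r s t p (c⁻¹ • x) ≤ ENNReal.ofReal |c⁻¹| * sigmaP r s t p x :=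
        sigmaP_smul_le_of_abs_le_one hp hcinv x
    _ ≤ ENNReal.ofReal c⁻¹ * ENNReal.ofReal c := by
        rw [abs_of_pos (inv_pos.2 hc0), ← ENNReal.ofReal_toReal hx.ne]
        exact mul_le_mul_right (ENNReal.ofReal_le_ofReal (le_max_right _ _)) _
    _ = 1 := by rw [← ENNReal.ofReal_mul (inv_pos.2 hc0).le, inv_mul_cancel₀ hc0.ne',
        ENNReal.ofReal_one]

lemma mem_luxSet_of_lux_lt (hp : ∀ n, 1 ≤ p n) {x : ℕ → ℝ} (hx : x ∈ lrstp r s t p) {ε : ℝ}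
    (h : lux r s t p x < ε) : ε ∈ luxSet r s t p x := by
  obtain ⟨c, hc, hcε⟩ := exists_lt_of_csInf_lt (luxSet_nonempty hp hx) h
  exact mem_luxSet_of_le hp hc hcε.le

lemma abs_Amap_le_one_of_sigmaP_le_one (hp : ∀ n, 0 < p n) {x : ℕ → ℝ}
    (hx : sigmaP r s t p x ≤ 1) (n : ℕ) : |Amap r s t x n| ≤ 1 := by
  have h : |Amap r s t x n| ^ p n ≤ 1 :=
    ENNReal.ofReal_le_one.1 ((ENNReal.le_tsum n).trans hx)
  by_contra! h1
  exact h.not_gt (Real.one_lt_rpow h1 (hp n))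

lemma abs_Amap_le_lux (hp : ∀ n, 1 ≤ p n) {x : ℕ → ℝ} (hx : x ∈ lrstp r s t p) (n : ℕ) :
    |Amap r s t x n| ≤ lux r s t p x := by
  refine le_of_forall_gt_imp_ge_of_dense fun ε hε => ?_
  obtain ⟨hε0, hεx⟩ := mem_luxSet_of_lux_lt hp hx hε
  have h := abs_Amap_le_one_of_sigmaP_le_one (fun n => one_pos.trans_le (hp n)) hεx n
  rw [Amap_smul, abs_mul, abs_of_pos (inv_pos.2 hε0), inv_mul_le_iff₀ hε0, mul_one] at h
  exact h

end Luxemburg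

section Norm

variable {r s t p : ℕ → ℝ}

lemma lux_smul (hp : ∀ n, p n ≠ 0) (c : ℝ) (x : ℕ → ℝ) :
    lux r s t p (c • x) = |c| * lux r s t p x := by
  rcases eq_or_ne c 0 with rfl | hc
  · simp [lux_zero hp]
  have hc' : 0 < |c| := abs_pos.2 hc
  have hset : luxSet r s t p (c • x) = |c| • luxSet r s t p x := by
    ext d
    have hσ : sigmaP r s t p (d⁻¹ • c • x) = sigmaP r s t p ((|c|⁻¹ * d)⁻¹ • x) := by
      rw [smul_smul, sigmaP_smul_abs, sigmaP_smul_abs ((|c|⁻¹ * d)⁻¹)]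
      congr 2
      rw [mul_inv, inv_inv, abs_mul, abs_mul, abs_abs, mul_comm]
    rw [Set.mem_smul_set_iff_inv_smul_mem₀ hc'.ne', smul_eq_mul]
    simp only [luxSet, Set.mem_ofPred_eq, hσ, mul_pos_iff_of_pos_left (inv_pos.2 hc')]
  rw [lux_def, hset, Real.sInf_smul_of_nonneg hc'.le, lux_def, smul_eq_mul]

lemma add_mem_luxSet (hp : ∀ n, 1 ≤ p n) {x y : ℕ → ℝ} {a b : ℝ} (ha : a ∈ luxSet r s t p x)
    (hb : b ∈ luxSet r s t p y) : a + b ∈ luxSet r s t p (x + y) := by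
  obtain ⟨ha0, hax⟩ := ha
  obtain ⟨hb0, hby⟩ := hb
  have hab : 0 < a + b := add_pos ha0 hb0
  have hweights : a / (a + b) + b / (a + b) = 1 := by rw [← add_div, div_self hab.ne']
  have hxy : (a + b)⁻¹ • (x + y) = (a / (a + b)) • a⁻¹ • x + (b / (a + b)) • b⁻¹ • y := by
    simp only [smul_smul, smul_add]
    congr 2 <;> field_simp
  refine ⟨hab, ?_⟩
  calc sigmaP r s t p ((a + b)⁻¹ • (x + y))
      ≤ ENNReal.ofReal (a / (a + b)) * sigmaP r s t p (a⁻¹ • x) +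
          ENNReal.ofReal (b / (a + b)) * sigmaP r s t p (b⁻¹ • y) := by
        rw [hxy]; exact sigmaP_add_le hp (by positivity) (by positivity) hweights _ _
    _ ≤ ENNReal.ofReal (a / (a + b)) + ENNReal.ofReal (b / (a + b)) := by
        gcongr <;> exact mul_le_of_le_one_right' ‹_›
    _ = 1 := by rw [← ENNReal.ofReal_add (by positivity) (by positivity), hweights,
        ENNReal.ofReal_one]

lemma lux_add_le (hp : ∀ n, 1 ≤ p n) {x y : ℕ → ℝ} (hx : x ∈ lrstp r s t p)
    (hy : y ∈ lrstp r s t p) : lux r s t p (x + y) ≤ lux r s t p x + lux r s t p y := by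
  have hSx := luxSet_nonempty hp hx
  have hSy := luxSet_nonempty hp hy
  calc lux r s t p (x + y) ≤ sInf (luxSet r s t p x + luxSet r s t p y) :=
        csInf_le_csInf (luxSet_bddBelow _) (hSx.add hSy)
          (Set.add_subset_iff.2 fun _ ha _ hb => add_mem_luxSet hp ha hb)
    _ = lux r s t p x + lux r s t p y :=
        csInf_add hSx (luxSet_bddBelow x) hSy (luxSet_bddBelow y)

variable (hr : ∀ n, r n ≠ 0) (ht : ∀ n, t n ≠ 0) (hs0 : s 0 ≠ 0) (hp : ∀ n, 1 ≤ p n)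
include hr ht hs0 hp

lemma lux_eq_zero_iff {x : ℕ → ℝ} (hx : x ∈ lrstp r s t p) : lux r s t p x = 0 ↔ x = 0 := by
  refine ⟨fun h => eq_zero_of_Amap_eq_zero hr ht hs0 fun n => ?_, ?_⟩
  · exact abs_nonpos_iff.1 (h ▸ abs_Amap_le_lux hp hx n)
  · rintro rfl
    exact lux_zero fun n => (one_pos.trans_le (hp n)).ne'

lemma tendsto_apply_of_tendsto_lux {ι : Type*} {F : Filter ι} {ys : ι → ℕ → ℝ}
    (hys : ∀ i, ys i ∈ lrstp r s t p) (h : Tendsto (fun i => lux r s t p (ys i)) F (𝓝 0))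
    (k : ℕ) : Tendsto (fun i => ys i k) F (𝓝 0) :=
  tendsto_apply_of_tendsto_Amap hr ht hs0
    (fun n => squeeze_zero_norm (fun i => abs_Amap_le_lux hp (hys i) n) h) k

variable {M : ℝ} (hpM : ∀ n, p n ≤ M)
include hpM

lemma tendsto_apply_of_tendsto_lux_sub {xs : ℕ → ℕ → ℝ} {x : ℕ → ℝ}
    (hxs : ∀ m, xs m ∈ lrstp r s t p) (hx : x ∈ lrstp r s t p)
    (h : Tendsto (fun m => lux r s t p (xs m - x)) atTop (𝓝 0)) (k : ℕ) :
    Tendsto (fun m => xs m k) atTop (𝓝 (x k)) := by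
  simpa using (tendsto_apply_of_tendsto_lux hr ht hs0 hp
    (fun m => sub_mem_lrstp hp hpM (hxs m) hx) h k).add_const (x k)

end Norm

section Completeness

variable {r s t p : ℕ → ℝ} (hr : ∀ n, r n ≠ 0) (ht : ∀ n, t n ≠ 0) (hs0 : s 0 ≠ 0)
  (hp : ∀ n, 1 ≤ p n) {M : ℝ} (hpM : ∀ n, p n ≤ M) {xs : ℕ → ℕ → ℝ}
  (hxs : ∀ m, xs m ∈ lrstp r s t p)
  (hcauchy : ∀ ε : ℝ, 0 < ε → ∃ N, ∀ m l, N ≤ m → N ≤ l → lux r s t p (xs m - xs l) < ε)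
include hr ht hs0 hp hpM hxs hcauchy

lemma cauchySeq_apply_of_lux_cauchy (k : ℕ) : CauchySeq fun m => xs m k := by
  have hlux : Tendsto (fun q : ℕ × ℕ => lux r s t p (xs q.1 - xs q.2)) atTop (𝓝 0) := by
    refine Metric.tendsto_atTop.2 fun ε hε => ?_
    obtain ⟨N, hN⟩ := hcauchy ε hε
    refine ⟨(N, N), fun q hq => ?_⟩
    rw [Real.dist_eq, sub_zero, abs_of_nonneg (lux_nonneg _)]
    exact hN _ _ hq.1 hq.2
  have hk := (tendsto_apply_of_tendsto_lux (ys := fun q : ℕ × ℕ => xs q.1 - xs q.2) hr ht hs0 hp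
    (fun q => sub_mem_lrstp hp hpM (hxs q.1) (hxs q.2)) hlux k).abs
  rw [abs_zero] at hk
  exact cauchySeq_iff_tendsto_dist_atTop_0.2 (hk.congr fun q => (Real.dist_eq _ _).symm)

lemma exists_tendsto_lux_of_cauchy :
    ∃ x ∈ lrstp r s t p, Tendsto (fun m => lux r s t p (xs m - x)) atTop (𝓝 0) := by
  choose x hx using fun k =>
    cauchySeq_tendsto_of_complete (cauchySeq_apply_of_lux_cauchy hr ht hs0 hp hpM hxs hcauchy k)
  -- letting `l → ∞` in `lux (xs m - xs l) < ε` keeps `ε` admissible for `xs m - x`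
  have hclose : ∀ ε > 0, ∃ N, ∀ m ≥ N, ε ∈ luxSet r s t p (xs m - x) := by
    intro ε hε
    obtain ⟨N, hN⟩ := hcauchy ε hε
    refine ⟨N, fun m hm => ⟨hε, sigmaP_le_of_tendsto (F := atTop)
      (ys := fun l => ε⁻¹ • (xs m - xs l)) (fun n => zero_le_one.trans (hp n)) (fun k => ?_) ?_⟩⟩
    · exact ((hx k).const_sub (xs m k)).const_mul ε⁻¹
    · filter_upwards [eventually_ge_atTop N] with l hl
      exact (mem_luxSet_of_lux_lt hp (sub_mem_lrstp hp hpM (hxs m) (hxs l)) (hN m l hm hl)).2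
  obtain ⟨N, hN⟩ := hclose 1 one_pos
  have hxN : xs N - x ∈ lrstp r s t p := by
    simpa [lrstp] using (hN N le_rfl).2.trans_lt ENNReal.one_lt_top
  refine ⟨x, by simpa using sub_mem_lrstp hp hpM (hxs N) hxN, ?_⟩
  refine Metric.tendsto_atTop.2 fun ε hε => ?_
  obtain ⟨N', hN'⟩ := hclose (ε / 2) (half_pos hε)
  refine ⟨N', fun m hm => ?_⟩
  rw [Real.dist_eq, sub_zero, abs_of_nonneg (lux_nonneg _)]
  exact (lux_le_of_mem (hN' m hm)).trans_lt (half_lt_self hε)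

end Completeness

theorem lrstp_BK_space
    (r s t p : ℕ → ℝ) (hr : ∀ n, r n ≠ 0) (ht : ∀ n, t n ≠ 0) (hs0 : s 0 ≠ 0)
    (M : ℝ) (hp : ∀ n, 1 < p n) (hpM : ∀ n, p n ≤ M) :
    -- the Luxemburg norm is a norm on `l(r,s,t,p;Δ)`
    (∀ x ∈ lrstp r s t p, lux r s t p x = 0 ↔ x = 0) ∧
    (∀ (c : ℝ), ∀ x ∈ lrstp r s t p, lux r s t p (c • x) = |c| * lux r s t p x) ∧
    (∀ x ∈ lrstp r s t p, ∀ y ∈ lrstp r s t p,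
      lux r s t p (x + y) ≤ lux r s t p x + lux r s t p y) ∧
    -- completeness: every Cauchy sequence in the space converges in the space
    (∀ xs : ℕ → ℕ → ℝ, (∀ m, xs m ∈ lrstp r s t p) →
      (∀ ε : ℝ, 0 < ε → ∃ N, ∀ m l, N ≤ m → N ≤ l →
        lux r s t p (xs m - xs l) < ε) →
      ∃ x ∈ lrstp r s t p,
        Tendsto (fun m => lux r s t p (xs m - x)) atTop (𝓝 0)) ∧
    -- each coordinate functional is continuous
    (∀ (xs : ℕ → ℕ → ℝ) (x : ℕ → ℝ), (∀ m, xs m ∈ lrstp r s t p) →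
      x ∈ lrstp r s t p →
      Tendsto (fun m => lux r s t p (xs m - x)) atTop (𝓝 0) →
      ∀ k, Tendsto (fun m => xs m k) atTop (𝓝 (x k))) := by
  have hp1 : ∀ n, 1 ≤ p n := fun n => (hp n).le
  exact ⟨fun x hx => lux_eq_zero_iff hr ht hs0 hp1 hx,
    fun c x _ => lux_smul (fun n => (zero_lt_one.trans (hp n)).ne') c x,
    fun x hx y hy => lux_add_le hp1 hx hy,
    fun xs hxs hcauchy => exists_tendsto_lux_of_cauchy hr ht hs0 hp1 hpM hxs hcauchy,
    fun xs x hxs hx hlux => tendsto_apply_of_tendsto_lux_sub hr ht hs0 hp1 hpM hxs hx hlux⟩
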